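/- arXiv:2108.04434 — 3 statements merged into one kernel-verified Lean document; each statement's English description precedes it below -/
import Mathlib

section
/- Let P be a nonzero orthogonal projection on ℂ^{2^n} and let Ω_i be a finite set of 2^n × 2^n complex matrices. Define A_i = (1/tr(P)²) Σ_{E∈Ω_i} tr(EP)·tr(E†P) and B_i = (1/tr(P)) Σ_{E∈Ω_i} tr(EPE†P), and for each E define 𝓔_E = PEP − (tr(EP)/tr(P))·P. Then B_i − A_i = (1/tr(P)) Σ_{E∈Ω_i} ‖𝓔_E‖_F². -/
open Matrix BigOperators

lemma trace_ne_zero_aux (n : ℕ) (P : Matrix (Fin (2 ^ n)) (Fin (2 ^ n)) ℂ)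
    (hP : P ≠ 0) (hproj : P * P = P) (hherm : Pᴴ = P) : Matrix.trace P ≠ 0 := by
  have h1 : Matrix.trace P = Matrix.trace (Pᴴ * P) := by rw [hherm, hproj]
  have h2 : Matrix.trace (Pᴴ * P) =
      ((∑ i, ∑ j, Complex.normSq (P j i) : ℝ) : ℂ) := by
    simp [Matrix.trace, Matrix.mul_apply, Matrix.diag, Matrix.conjTranspose_apply,
      Complex.normSq_eq_conj_mul_self]
  intro h
  rw [h1, h2] at h
  have h3 : (∑ i, ∑ j, Complex.normSq (P j i) : ℝ) = 0 := by exact_mod_cast h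
  have h4 : ∀ i j, Complex.normSq (P j i) = 0 := by
    intro i j
    have := (Finset.sum_eq_zero_iff_of_nonneg (fun i _ => Finset.sum_nonneg
      (fun j _ => Complex.normSq_nonneg _))).mp h3 i (Finset.mem_univ i)
    exact (Finset.sum_eq_zero_iff_of_nonneg
      (fun j _ => Complex.normSq_nonneg _)).mp this j (Finset.mem_univ j)
  apply hP
  ext i j
  simpa using Complex.normSq_eq_zero.mp (h4 j i)

lemma term_aux (n : ℕ) (P E : Matrix (Fin (2 ^ n)) (Fin (2 ^ n)) ℂ)
    (hproj : P * P = P) (hherm : Pᴴ = P) (htr : Matrix.trace P ≠ 0) :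
    Matrix.trace ((P * E * P - (Matrix.trace (E * P) / Matrix.trace P) • P)ᴴ *
        (P * E * P - (Matrix.trace (E * P) / Matrix.trace P) • P)) =
      Matrix.trace (E * P * Eᴴ * P) -
        Matrix.trace (E * P) * Matrix.trace (Eᴴ * P) / Matrix.trace P := by
  have hPP : ∀ M : Matrix (Fin (2 ^ n)) (Fin (2 ^ n)) ℂ, P * (P * M) = P * M := by
    intro M; rw [← Matrix.mul_assoc, hproj]
  have htrP : star (Matrix.trace P) = Matrix.trace P := by
    rw [← Matrix.trace_conjTranspose, hherm]
  have htrEP : star (Matrix.trace (E * P)) = Matrix.trace (Eᴴ * P) := by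
    rw [← Matrix.trace_conjTranspose, Matrix.conjTranspose_mul, hherm,
      Matrix.trace_mul_comm]
  have hc : star (Matrix.trace (E * P) / Matrix.trace P) =
      Matrix.trace (Eᴴ * P) / Matrix.trace P := by
    rw [star_div₀, htrP, htrEP]
  have hX : (P * E * P)ᴴ = P * Eᴴ * P := by
    rw [Matrix.conjTranspose_mul, Matrix.conjTranspose_mul, hherm, Matrix.mul_assoc]
  have e1 : Matrix.trace ((P * Eᴴ * P) * (P * E * P)) = Matrix.trace (E * P * Eᴴ * P) := by
    have l : (P * Eᴴ * P) * (P * E * P) = P * (Eᴴ * (P * (E * P))) := by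
      simp only [Matrix.mul_assoc, hPP]
    rw [l, Matrix.trace_mul_comm]
    have l2 : (Eᴴ * (P * (E * P))) * P = Eᴴ * (P * (E * P)) := by
      simp only [Matrix.mul_assoc, hproj, hPP]
    rw [l2, Matrix.trace_mul_comm]
    have l3 : (P * (E * P)) * Eᴴ = P * (E * P * Eᴴ) := by
      simp only [Matrix.mul_assoc]
    rw [l3, Matrix.trace_mul_comm]
  have e2 : Matrix.trace (P * (P * E * P)) = Matrix.trace (E * P) := by
    have l : P * (P * E * P) = P * (E * P) := by simp only [Matrix.mul_assoc, hPP]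
    rw [l, Matrix.trace_mul_comm, Matrix.mul_assoc, hproj]
  have e3 : Matrix.trace ((P * Eᴴ * P) * P) = Matrix.trace (Eᴴ * P) := by
    rw [Matrix.mul_assoc, hproj, Matrix.trace_mul_cycle, hproj, Matrix.trace_mul_comm]
  have e4 : Matrix.trace (P * P : Matrix (Fin (2 ^ n)) (Fin (2 ^ n)) ℂ) = Matrix.trace P := by
    rw [hproj]
  rw [Matrix.conjTranspose_sub, Matrix.conjTranspose_smul, hX, hherm, hc]
  simp only [Matrix.sub_mul, Matrix.mul_sub, Matrix.smul_mul, Matrix.mul_smul, smul_smul,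
    Matrix.trace_sub, Matrix.trace_smul, smul_eq_mul]
  rw [e1, e2, e3, e4]
  field_simp
  ring

/-- For a nonzero orthogonal projection `P` on `ℂ^(2^n)` and a finite set
`Ω_i` of `2^n × 2^n` matrices, with
`A_i = (1/tr(P)²) Σ_{E∈Ω_i} tr(EP)·tr(E†P)`, `B_i = (1/tr(P)) Σ_{E∈Ω_i} tr(EPE†P)` and
`𝓔_E = P E P - (tr(EP)/tr(P)) • P`, we have
`B_i - A_i = (1/tr(P)) Σ_{E∈Ω_i} ‖𝓔_E‖_F²` (with `‖M‖_F² = tr(Mᴴ M)`). -/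
theorem stmt1 (n : ℕ) (P : Matrix (Fin (2 ^ n)) (Fin (2 ^ n)) ℂ)
    (hP : P ≠ 0) (hproj : P * P = P) (hherm : Pᴴ = P)
    (Ω : Finset (Matrix (Fin (2 ^ n)) (Fin (2 ^ n)) ℂ)) :
    (1 / Matrix.trace P) * (∑ E ∈ Ω, Matrix.trace (E * P * Eᴴ * P)) -
      (1 / (Matrix.trace P) ^ 2) * (∑ E ∈ Ω, Matrix.trace (E * P) * Matrix.trace (Eᴴ * P)) =
    (1 / Matrix.trace P) *
      ∑ E ∈ Ω,
        Matrix.trace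
          ((P * E * P - (Matrix.trace (E * P) / Matrix.trace P) • P)ᴴ *
            (P * E * P - (Matrix.trace (E * P) / Matrix.trace P) • P)) := by
  have htr := trace_ne_zero_aux n P hP hproj hherm
  have hrw : ∀ E ∈ Ω, Matrix.trace
          ((P * E * P - (Matrix.trace (E * P) / Matrix.trace P) • P)ᴴ *
            (P * E * P - (Matrix.trace (E * P) / Matrix.trace P) • P)) =
      Matrix.trace (E * P * Eᴴ * P) -
        Matrix.trace (E * P) * Matrix.trace (Eᴴ * P) / Matrix.trace P :=
    fun E _ => term_aux n P E hproj hherm htr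
  rw [Finset.sum_congr rfl hrw, Finset.sum_sub_distrib]
  rw [← Finset.sum_div]
  field_simp
end

section
/- Let P be a nonzero orthogonal projection on ℂ^{2^n} and Ω_i a finite set of 2^n × 2^n complex matrices, with A_i = (1/tr(P)²) Σ_{E∈Ω_i} tr(EP)·tr(E†P) and B_i = (1/tr(P)) Σ_{E∈Ω_i} tr(EPE†P). Then B_i ≥ A_i ≥ 0, and B_i = A_i if and only if for every E ∈ Ω_i there is a complex number g_E with PEP = g_E·P (i.e., the Knill–Laflamme error-correction condition holds for every operator in Ω_i). -/
open Matrix BigOperators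

/-- The generalized A-type quantum weight enumerator
`A = (1/tr(P)²) Σ_{E∈Ω} tr(EP)·tr(E†P)` (a real number). -/
noncomputable def Acoef (N : ℕ) (P : Matrix (Fin N) (Fin N) ℂ)
    (Ω : Finset (Matrix (Fin N) (Fin N) ℂ)) : ℝ :=
  ((1 / (Matrix.trace P) ^ 2) *
    ∑ E ∈ Ω, Matrix.trace (E * P) * Matrix.trace (Eᴴ * P)).re

/-- The generalized B-type quantum weight enumerator
`B = (1/tr(P)) Σ_{E∈Ω} tr(EPE†P)` (a real number). -/
noncomputable def Bcoef (N : ℕ) (P : Matrix (Fin N) (Fin N) ℂ)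
    (Ω : Finset (Matrix (Fin N) (Fin N) ℂ)) : ℝ :=
  ((1 / Matrix.trace P) * ∑ E ∈ Ω, Matrix.trace (E * P * Eᴴ * P)).re

lemma trNormSq {m : Type*} [Fintype m] [DecidableEq m] (M : Matrix m m ℂ) :
    (M * Mᴴ).trace = ((∑ i, ∑ j, Complex.normSq (M i j) : ℝ) : ℂ) := by
  simp [Matrix.trace, Matrix.mul_apply, Matrix.diag, Matrix.conjTranspose_apply,
    Complex.mul_conj]

lemma sumNormSqZero {m : Type*} [Fintype m] (M : Matrix m m ℂ)
    (h : ∑ i, ∑ j, Complex.normSq (M i j) = 0) : M = 0 := by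
  ext i j
  have h1 := (Finset.sum_eq_zero_iff_of_nonneg (fun i _ => Finset.sum_nonneg
    (fun j _ => Complex.normSq_nonneg _))).mp h i (Finset.mem_univ i)
  have h2 := (Finset.sum_eq_zero_iff_of_nonneg (fun j _ => Complex.normSq_nonneg _)).mp
    h1 j (Finset.mem_univ j)
  simpa using Complex.normSq_eq_zero.mp h2

set_option maxHeartbeats 1000000 in
/-- For a nonzero orthogonal projection `P` on `ℂ^(2^n)` and a finite set
`Ω_i` of matrices, `B_i ≥ A_i ≥ 0`, and `B_i = A_i` iff the Knill–Laflamme condition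
`P E P = g_E • P` holds for every `E ∈ Ω_i`. -/
theorem stmt2 (n : ℕ) (P : Matrix (Fin (2 ^ n)) (Fin (2 ^ n)) ℂ)
    (hP : P ≠ 0) (hproj : P * P = P) (hherm : Pᴴ = P)
    (Ω : Finset (Matrix (Fin (2 ^ n)) (Fin (2 ^ n)) ℂ)) :
    (0 ≤ Acoef (2 ^ n) P Ω ∧ Acoef (2 ^ n) P Ω ≤ Bcoef (2 ^ n) P Ω) ∧
      (Bcoef (2 ^ n) P Ω = Acoef (2 ^ n) P Ω ↔
        ∀ E ∈ Ω, ∃ g : ℂ, P * E * P = g • P) := by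
  set s : ℝ := ∑ i, ∑ j, Complex.normSq (P i j) with hs_def
  have hs : P.trace = (s : ℂ) := by rw [← trNormSq P, hherm, hproj]
  have hs0 : 0 < s := by
    rcases lt_or_eq_of_le (Finset.sum_nonneg fun i _ => Finset.sum_nonneg
      fun j _ => Complex.normSq_nonneg _) with h | h
    · exact h
    · exact absurd (sumNormSqZero P h.symm) hP
  have hsne : (s : ℂ) ≠ 0 := by exact_mod_cast hs0.ne'
  -- the three real quantities attached to each E
  set a : Matrix (Fin (2 ^ n)) (Fin (2 ^ n)) ℂ → ℝ :=
    fun E => Complex.normSq ((E * P).trace) with ha_def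
  set b : Matrix (Fin (2 ^ n)) (Fin (2 ^ n)) ℂ → ℝ :=
    fun E => ∑ i, ∑ j, Complex.normSq ((P * E * P) i j) with hb_def
  set q : Matrix (Fin (2 ^ n)) (Fin (2 ^ n)) ℂ → ℝ :=
    fun E => ∑ i, ∑ j,
      Complex.normSq ((P * E * P - ((E * P).trace / (s : ℂ)) • P) i j) with hq_def
  -- per-E matrix facts
  have hFfacts : ∀ E : Matrix (Fin (2 ^ n)) (Fin (2 ^ n)) ℂ,
      ((P * E * P).trace = (E * P).trace ∧ (P * E * P) * P = P * E * P) ∧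
      ((P * E * P)ᴴ = P * Eᴴ * P ∧ P * (P * E * P)ᴴ = (P * E * P)ᴴ) := by
    intro E
    refine ⟨⟨?_, ?_⟩, ?_, ?_⟩
    · rw [Matrix.mul_assoc, Matrix.trace_mul_comm, Matrix.mul_assoc, hproj]
    · simp only [Matrix.mul_assoc, hproj]
    · rw [Matrix.conjTranspose_mul, Matrix.conjTranspose_mul, hherm, Matrix.mul_assoc]
    · rw [Matrix.conjTranspose_mul, Matrix.conjTranspose_mul, hherm]
      simp only [← Matrix.mul_assoc, hproj]
  have hHtr : ∀ E : Matrix (Fin (2 ^ n)) (Fin (2 ^ n)) ℂ,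
      (Eᴴ * P).trace = starRingEnd ℂ ((E * P).trace) := by
    intro E
    calc (Eᴴ * P).trace = ((P * E)ᴴ).trace := by
          rw [Matrix.conjTranspose_mul, hherm]
      _ = star ((P * E).trace) := Matrix.trace_conjTranspose _
      _ = starRingEnd ℂ ((E * P).trace) := by rw [Matrix.trace_mul_comm]; rfl
  have hBterm : ∀ E : Matrix (Fin (2 ^ n)) (Fin (2 ^ n)) ℂ,
      (E * P * Eᴴ * P).trace = ((b E : ℝ) : ℂ) := by
    intro E
    have h1 : (P * E * P) * (P * E * P)ᴴ = P * (E * (P * (P * E * P)ᴴ)) := by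
      simp only [Matrix.mul_assoc]
    have h2 : (E * P * Eᴴ * P).trace = ((P * E * P) * (P * E * P)ᴴ).trace := by
      conv_rhs => rw [h1, (hFfacts E).2.2, (hFfacts E).2.1, Matrix.trace_mul_comm]
      simp only [Matrix.mul_assoc, hproj]
    rw [h2, trNormSq]
  -- the key per-E trace identity
  have hKey : ∀ E : Matrix (Fin (2 ^ n)) (Fin (2 ^ n)) ℂ,
      q E = b E - a E / s := by
    intro E
    have htrFP : ((P * E * P) * P).trace = (E * P).trace := by
      rw [(hFfacts E).1.2, (hFfacts E).1.1]
    have htrPFH : (P * (P * E * P)ᴴ).trace = starRingEnd ℂ ((E * P).trace) := by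
      rw [(hFfacts E).2.2, Matrix.trace_conjTranspose, (hFfacts E).1.1]
      rfl
    have key : ((P * E * P - ((E * P).trace / (s : ℂ)) • P) *
        (P * E * P - ((E * P).trace / (s : ℂ)) • P)ᴴ).trace
        = ((P * E * P) * (P * E * P)ᴴ).trace - ((a E / s : ℝ) : ℂ) := by
      rw [Matrix.conjTranspose_sub, Matrix.conjTranspose_smul, Matrix.sub_mul,
        Matrix.mul_sub, Matrix.mul_sub, Matrix.smul_mul, Matrix.mul_smul,
        Matrix.mul_smul, Matrix.trace_sub, Matrix.trace_sub, Matrix.trace_sub,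
        Matrix.trace_smul, Matrix.trace_smul, Matrix.trace_smul, hherm,
        htrFP, htrPFH, Matrix.smul_mul, Matrix.trace_smul, hproj, hs]
      simp only [smul_eq_mul, Complex.star_def, Complex.ofReal_div, map_div₀,
        Complex.conj_ofReal, ha_def]
      rw [← Complex.mul_conj]
      field_simp
      ring
    rw [trNormSq, trNormSq] at key
    have := congrArg Complex.re key
    simpa [hq_def, hb_def, Complex.ofReal_re] using this
  -- equality characterization per E
  have hQzero : ∀ E : Matrix (Fin (2 ^ n)) (Fin (2 ^ n)) ℂ,
      q E = 0 ↔ ∃ g : ℂ, P * E * P = g • P := by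
    intro E
    constructor
    · intro h
      refine ⟨(E * P).trace / (s : ℂ), ?_⟩
      have := sumNormSqZero _ h
      exact sub_eq_zero.mp this
    · rintro ⟨g, hg⟩
      have htr : (E * P).trace = g * s := by
        rw [← (hFfacts E).1.1, hg, Matrix.trace_smul, hs, smul_eq_mul]
      have hG : P * E * P - ((E * P).trace / (s : ℂ)) • P = 0 := by
        rw [hg, htr, mul_div_assoc, div_self hsne, mul_one, sub_self]
      show q E = 0
      rw [hq_def]
      simp only [hG, Matrix.zero_apply, Complex.normSq_zero, Finset.sum_const_zero]
  -- evaluate Acoef and Bcoef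
  have hAv : Acoef (2 ^ n) P Ω = (1 / s ^ 2) * ∑ E ∈ Ω, a E := by
    have hsumA : ∑ E ∈ Ω, (E * P).trace * (Eᴴ * P).trace
        = ((∑ E ∈ Ω, a E : ℝ) : ℂ) := by
      push_cast
      exact Finset.sum_congr rfl fun E _ => by
        rw [hHtr E, Complex.mul_conj, ha_def]
    unfold Acoef
    rw [hs, hsumA,
      show (1 / ((s : ℂ)) ^ 2) * (((∑ E ∈ Ω, a E : ℝ)) : ℂ)
        = (((1 / s ^ 2) * ∑ E ∈ Ω, a E : ℝ) : ℂ) by push_cast; ring]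
    exact Complex.ofReal_re _
  have hBv : Bcoef (2 ^ n) P Ω = (1 / s) * ∑ E ∈ Ω, b E := by
    unfold Bcoef
    rw [hs, Finset.sum_congr rfl fun E _ => hBterm E]
    rw [show (1 / ((s : ℂ))) * (∑ E ∈ Ω, ((b E : ℝ) : ℂ))
        = (((1 / s) * ∑ E ∈ Ω, b E : ℝ) : ℂ) by push_cast; ring]
    exact Complex.ofReal_re _
  -- B = A + (1/s) * Σ q
  have hBA : Bcoef (2 ^ n) P Ω = Acoef (2 ^ n) P Ω + (1 / s) * ∑ E ∈ Ω, q E := by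
    rw [hAv, hBv, Finset.sum_congr rfl fun E _ => hKey E, Finset.sum_sub_distrib,
      ← Finset.sum_div]
    field_simp
    ring
  have hqnn : ∀ E ∈ Ω, 0 ≤ q E := by
    intro E _
    rw [hq_def]
    exact Finset.sum_nonneg fun i _ =>
      Finset.sum_nonneg fun j _ => Complex.normSq_nonneg _
  have hQsum : 0 ≤ ∑ E ∈ Ω, q E := Finset.sum_nonneg hqnn
  have hAnn : 0 ≤ Acoef (2 ^ n) P Ω := by
    rw [hAv]
    have : 0 ≤ ∑ E ∈ Ω, a E := Finset.sum_nonneg fun E _ => Complex.normSq_nonneg _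
    positivity
  constructor
  · refine ⟨hAnn, ?_⟩
    rw [hBA]
    have : 0 ≤ (1 / s) * ∑ E ∈ Ω, q E := by positivity
    linarith
  · rw [hBA]
    constructor
    · intro h
      have hsum0 : ∑ E ∈ Ω, q E = 0 := by
        have h1 : (1 / s) * ∑ E ∈ Ω, q E = 0 := by linarith
        have h2 : (1 / s) ≠ 0 := by positivity
        exact (mul_eq_zero.mp h1).resolve_left h2
      intro E hE
      exact (hQzero E).mp ((Finset.sum_eq_zero_iff_of_nonneg hqnn).mp hsum0 E hE)
    · intro h
      have : ∑ E ∈ Ω, q E = 0 :=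
        Finset.sum_eq_zero fun E hE => (hQzero E).mpr (h E hE)
      rw [this, mul_zero, add_zero]
end

section
/- Let P be a nonzero orthogonal projection on ℂ^{2^n}, let Ω be a finite set of 2^n × 2^n complex matrices partitioned into disjoint subsets Ω_0, …, Ω_{w−1}, and let |A⟩ = Σ_i A_i|i⟩, |B⟩ = Σ_i B_i|i⟩ be the generalized quantum weight enumerator vectors. Let |φ⟩ = Σ_{σ∈G_n} tr(σP)|σ⟩ ∈ ℂ^{G_n} and |AUX⟩ = |φ⟩⊗|φ⟩, and define the connection matrices M_A = Σ_{i=0}^{w−1} Σ_{E∈Ω_i} Σ_{σ,τ∈G_n} 2^{−2n} tr(Eσ)·tr(E†τ) |i⟩⟨σ|⟨τ| and M_B = Σ_{i=0}^{w−1} Σ_{E∈Ω_i} Σ_{σ,τ∈G_n} 2^{−2n} tr(Eσ E†τ) |i⟩⟨σ|⟨τ|. Then M_A|AUX⟩ = (tr P)²|A⟩ and M_B|AUX⟩ = (tr P)|B⟩. -/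
open Matrix BigOperators

/-- The single-qubit Pauli matrices `I, X, Y, Z`, indexed by `Fin 4`. -/
noncomputable def pauli1 (k : Fin 4) : Matrix (Fin 2) (Fin 2) ℂ :=
  if k = 0 then 1
  else if k = 1 then !![0, 1; 1, 0]
  else if k = 2 then !![0, -Complex.I; Complex.I, 0]
  else !![1, 0; 0, -1]

/-- The `n`-qubit Pauli operator labelled by `p : Fin n → Fin 4`, i.e. the tensor product
`pauli1 (p 0) ⊗ ⋯ ⊗ pauli1 (p (n-1))`, acting on `(ℂ²)^{⊗n} ≅ ℂ^{2^n}` (whose standard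
basis is indexed by `Fin n → Fin 2`).  The map `p ↦ PauliOp n p` enumerates `G_n`. -/
noncomputable def PauliOp (n : ℕ) (p : Fin n → Fin 4) :
    Matrix (Fin n → Fin 2) (Fin n → Fin 2) ℂ :=
  fun v w => ∏ i, pauli1 (p i) (v i) (w i)

/-- The weight of a Pauli label: the number of non-identity tensor factors. -/
def pwt {n : ℕ} (p : Fin n → Fin 4) : ℕ :=
  (Finset.univ.filter fun i => p i ≠ 0).card

/-- The auxiliary exact weight enumerator `|AUX⟩ = |φ⟩ ⊗ |φ⟩` where
`|φ⟩ = Σ_{σ∈G_n} tr(σP) |σ⟩`, as a vector indexed by pairs of Pauli labels. -/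
noncomputable def AUXvec (n : ℕ) (P : Matrix (Fin n → Fin 2) (Fin n → Fin 2) ℂ) :
    (Fin n → Fin 4) × (Fin n → Fin 4) → ℂ :=
  fun στ => Matrix.trace (PauliOp n στ.1 * P) * Matrix.trace (PauliOp n στ.2 * P)

/-- The connection matrix
`M_A = Σ_i Σ_{E∈Ω_i} Σ_{σ,τ∈G_n} 2^{-2n} tr(Eσ) tr(E†τ) |i⟩⟨σ|⟨τ|`. -/
noncomputable def MAmat (n w : ℕ)
    (Ω : Fin w → Finset (Matrix (Fin n → Fin 2) (Fin n → Fin 2) ℂ)) :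
    Matrix (Fin w) ((Fin n → Fin 4) × (Fin n → Fin 4)) ℂ :=
  fun i στ => ((2 : ℂ) ^ (2 * n))⁻¹ *
    ∑ E ∈ Ω i, Matrix.trace (E * PauliOp n στ.1) * Matrix.trace (Eᴴ * PauliOp n στ.2)

/-- The connection matrix
`M_B = Σ_i Σ_{E∈Ω_i} Σ_{σ,τ∈G_n} 2^{-2n} tr(EσE†τ) |i⟩⟨σ|⟨τ|`. -/
noncomputable def MBmat (n w : ℕ)
    (Ω : Fin w → Finset (Matrix (Fin n → Fin 2) (Fin n → Fin 2) ℂ)) :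
    Matrix (Fin w) ((Fin n → Fin 4) × (Fin n → Fin 4)) ℂ :=
  fun i στ => ((2 : ℂ) ^ (2 * n))⁻¹ *
    ∑ E ∈ Ω i, Matrix.trace (E * PauliOp n στ.1 * Eᴴ * PauliOp n στ.2)

lemma pauli1_zero : pauli1 0 = 1 := rfl
lemma pauli1_one : pauli1 1 = !![0, 1; 1, 0] := rfl
lemma pauli1_two : pauli1 2 = !![0, -Complex.I; Complex.I, 0] := rfl
lemma pauli1_three : pauli1 3 = !![1, 0; 0, -1] := rfl

lemma pauli1_sum (a b c d : Fin 2) :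
    ∑ k : Fin 4, pauli1 k a b * pauli1 k c d =
      2 * (if a = d ∧ b = c then 1 else 0) := by
  fin_cases a <;> fin_cases b <;> fin_cases c <;> fin_cases d <;>
    norm_num [Fin.sum_univ_four, pauli1_zero, pauli1_one, pauli1_two, pauli1_three,
      Matrix.one_apply, Complex.ext_iff]

lemma pauliOp_sum (n : ℕ) (a b c d : Fin n → Fin 2) :
    ∑ p : Fin n → Fin 4, PauliOp n p a b * PauliOp n p c d =
      2 ^ n * (if a = d ∧ b = c then 1 else 0) := by
  have h : ∑ p : Fin n → Fin 4, PauliOp n p a b * PauliOp n p c d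
      = ∏ i, ∑ k : Fin 4, pauli1 k (a i) (b i) * pauli1 k (c i) (d i) := by
    rw [Finset.prod_univ_sum]
    simp [PauliOp, Fintype.piFinset_univ, Finset.prod_mul_distrib]
  rw [h]
  simp_rw [pauli1_sum]
  rw [Finset.prod_mul_distrib, Finset.prod_const, Fintype.prod_boole]
  simp [funext_iff, forall_and, Finset.card_univ]

lemma pauli_reconstruct (n : ℕ) (N : Matrix (Fin n → Fin 2) (Fin n → Fin 2) ℂ) :
    (∑ p : Fin n → Fin 4, Matrix.trace (PauliOp n p * N) • PauliOp n p)
      = ((2 : ℂ) ^ n) • N := by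
  ext b c
  simp only [Finset.sum_apply, Matrix.sum_apply, Matrix.smul_apply, Matrix.trace,
    Matrix.diag_apply, Matrix.mul_apply, smul_eq_mul]
  calc ∑ p : Fin n → Fin 4, (∑ e, ∑ f, PauliOp n p e f * N f e) * PauliOp n p b c
      = ∑ e, ∑ f, (∑ p : Fin n → Fin 4, PauliOp n p e f * PauliOp n p b c) * N f e := by
        simp_rw [Finset.sum_mul]
        rw [Finset.sum_comm]
        refine Finset.sum_congr rfl fun e _ => ?_
        rw [Finset.sum_comm]
        exact Finset.sum_congr rfl fun f _ => Finset.sum_congr rfl fun p _ => by ring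
    _ = ∑ e, ∑ f, (2 ^ n * if e = c ∧ f = b then 1 else 0) * N f e := by
        simp_rw [pauliOp_sum]
    _ = 2 ^ n * N b c := by
        simp [Finset.sum_ite_eq, ite_and, mul_comm]

lemma keyA (n : ℕ) (M N : Matrix (Fin n → Fin 2) (Fin n → Fin 2) ℂ) :
    ∑ p : Fin n → Fin 4, Matrix.trace (M * PauliOp n p) * Matrix.trace (PauliOp n p * N)
      = 2 ^ n * Matrix.trace (M * N) := by
  calc ∑ p : Fin n → Fin 4, Matrix.trace (M * PauliOp n p) * Matrix.trace (PauliOp n p * N)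
      = Matrix.trace (M * ∑ p : Fin n → Fin 4,
          Matrix.trace (PauliOp n p * N) • PauliOp n p) := by
        rw [Finset.mul_sum, Matrix.trace_sum]
        exact Finset.sum_congr rfl fun p _ => by
          rw [Matrix.mul_smul, Matrix.trace_smul, smul_eq_mul, mul_comm]
    _ = 2 ^ n * Matrix.trace (M * N) := by
        rw [pauli_reconstruct, Matrix.mul_smul, Matrix.trace_smul, smul_eq_mul]

lemma sumA (n : ℕ) (P E : Matrix (Fin n → Fin 2) (Fin n → Fin 2) ℂ) :
    ∑ στ : (Fin n → Fin 4) × (Fin n → Fin 4),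
        (Matrix.trace (E * PauliOp n στ.1) * Matrix.trace (Eᴴ * PauliOp n στ.2)) *
          (Matrix.trace (PauliOp n στ.1 * P) * Matrix.trace (PauliOp n στ.2 * P))
      = 2 ^ (2 * n) * (Matrix.trace (E * P) * Matrix.trace (Eᴴ * P)) := by
  rw [Fintype.sum_prod_type]
  calc ∑ σ : Fin n → Fin 4, ∑ τ : Fin n → Fin 4,
        (Matrix.trace (E * PauliOp n σ) * Matrix.trace (Eᴴ * PauliOp n τ)) *
          (Matrix.trace (PauliOp n σ * P) * Matrix.trace (PauliOp n τ * P))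
      = (∑ σ : Fin n → Fin 4, Matrix.trace (E * PauliOp n σ) * Matrix.trace (PauliOp n σ * P)) *
        (∑ τ : Fin n → Fin 4, Matrix.trace (Eᴴ * PauliOp n τ) * Matrix.trace (PauliOp n τ * P)) := by
        rw [Finset.sum_mul_sum]
        exact Finset.sum_congr rfl fun σ _ => Finset.sum_congr rfl fun τ _ => by ring
    _ = (2 ^ n * Matrix.trace (E * P)) * (2 ^ n * Matrix.trace (Eᴴ * P)) := by
        rw [keyA, keyA]
    _ = 2 ^ (2 * n) * (Matrix.trace (E * P) * Matrix.trace (Eᴴ * P)) := by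
        rw [two_mul, pow_add]; ring

lemma sumB (n : ℕ) (P E : Matrix (Fin n → Fin 2) (Fin n → Fin 2) ℂ) :
    ∑ στ : (Fin n → Fin 4) × (Fin n → Fin 4),
        Matrix.trace (E * PauliOp n στ.1 * Eᴴ * PauliOp n στ.2) *
          (Matrix.trace (PauliOp n στ.1 * P) * Matrix.trace (PauliOp n στ.2 * P))
      = 2 ^ (2 * n) * Matrix.trace (E * P * Eᴴ * P) := by
  rw [Fintype.sum_prod_type]
  have inner : ∀ σ : Fin n → Fin 4,
      ∑ τ : Fin n → Fin 4, Matrix.trace (E * PauliOp n σ * Eᴴ * PauliOp n τ) *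
          (Matrix.trace (PauliOp n σ * P) * Matrix.trace (PauliOp n τ * P))
        = Matrix.trace (PauliOp n σ * P) *
            (2 ^ n * Matrix.trace (E * PauliOp n σ * Eᴴ * P)) := by
    intro σ
    rw [← keyA n (E * PauliOp n σ * Eᴴ) P, Finset.mul_sum]
    exact Finset.sum_congr rfl fun τ _ => by ring
  simp_rw [inner]
  have cyc : ∀ σ : Fin n → Fin 4,
      Matrix.trace (E * PauliOp n σ * Eᴴ * P)
        = Matrix.trace ((Eᴴ * P * E) * PauliOp n σ) := by
    intro σ
    rw [mul_assoc (E * PauliOp n σ) Eᴴ P, Matrix.trace_mul_comm,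
      ← mul_assoc (Eᴴ * P) E (PauliOp n σ)]
  simp_rw [cyc]
  calc ∑ σ : Fin n → Fin 4, Matrix.trace (PauliOp n σ * P) *
        (2 ^ n * Matrix.trace ((Eᴴ * P * E) * PauliOp n σ))
      = 2 ^ n * ∑ σ : Fin n → Fin 4,
          Matrix.trace ((Eᴴ * P * E) * PauliOp n σ) * Matrix.trace (PauliOp n σ * P) := by
        rw [Finset.mul_sum]
        exact Finset.sum_congr rfl fun σ _ => by ring
    _ = 2 ^ n * (2 ^ n * Matrix.trace ((Eᴴ * P * E) * P)) := by rw [keyA]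
    _ = 2 ^ (2 * n) * Matrix.trace (E * P * Eᴴ * P) := by
        rw [mul_assoc (Eᴴ * P) E P, Matrix.trace_mul_comm,
          ← mul_assoc (E * P) Eᴴ P, two_mul, pow_add]
        ring

lemma trace_ne_zero (n : ℕ) (P : Matrix (Fin n → Fin 2) (Fin n → Fin 2) ℂ)
    (hP : P ≠ 0) (hproj : P * P = P) (hherm : Pᴴ = P) : Matrix.trace P ≠ 0 := by
  intro h0
  apply hP
  have h1 : Matrix.trace (Pᴴ * P) = 0 := by rw [hherm, hproj, h0]
  have h2 : (↑(∑ j, ∑ i, Complex.normSq (P i j)) : ℂ) = 0 := by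
    rw [← h1]
    simp only [Matrix.trace, Matrix.diag_apply, Matrix.mul_apply, Matrix.conjTranspose_apply]
    push_cast
    refine Finset.sum_congr rfl fun j _ => Finset.sum_congr rfl fun i _ => ?_
    rw [Complex.normSq_eq_conj_mul_self]
    rfl
  have h3 : ∑ j, ∑ i, Complex.normSq (P i j) = 0 := by exact_mod_cast h2
  ext i j
  have h4 : ∀ j' ∈ Finset.univ, (0:ℝ) ≤ ∑ i, Complex.normSq (P i j') :=
    fun j' _ => Finset.sum_nonneg fun i _ => Complex.normSq_nonneg _
  have h5 := (Finset.sum_eq_zero_iff_of_nonneg h4).mp h3 j (Finset.mem_univ j)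
  have h6 := (Finset.sum_eq_zero_iff_of_nonneg
    (fun i' _ => Complex.normSq_nonneg (P i' j))).mp h5 i (Finset.mem_univ i)
  simpa using Complex.normSq_eq_zero.mp h6

/-- For a nonzero orthogonal projection `P` on `ℂ^(2^n)` and a finite set
of Kraus operators partitioned into disjoint subsets `Ω_0, …, Ω_{w-1}`, the connection
matrices satisfy `M_A |AUX⟩ = (tr P)² |A⟩` and `M_B |AUX⟩ = (tr P) |B⟩`, where
`A_i = (1/tr(P)²) Σ_{E∈Ω_i} tr(EP) tr(E†P)` and `B_i = (1/tr(P)) Σ_{E∈Ω_i} tr(EPE†P)`. -/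
theorem stmt5 (n w : ℕ) (P : Matrix (Fin n → Fin 2) (Fin n → Fin 2) ℂ)
    (hP : P ≠ 0) (hproj : P * P = P) (hherm : Pᴴ = P)
    (Ω : Fin w → Finset (Matrix (Fin n → Fin 2) (Fin n → Fin 2) ℂ))
    (hdisj : ∀ i j, i ≠ j → Disjoint (Ω i) (Ω j)) :
    ((MAmat n w Ω).mulVec (AUXvec n P) =
        fun i => (Matrix.trace P) ^ 2 *
          ((1 / (Matrix.trace P) ^ 2) *
            ∑ E ∈ Ω i, Matrix.trace (E * P) * Matrix.trace (Eᴴ * P))) ∧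
      ((MBmat n w Ω).mulVec (AUXvec n P) =
        fun i => Matrix.trace P *
          ((1 / Matrix.trace P) * ∑ E ∈ Ω i, Matrix.trace (E * P * Eᴴ * P))) := by
  have htr : Matrix.trace P ≠ 0 := trace_ne_zero n P hP hproj hherm
  have h2n : ((2 : ℂ) ^ (2 * n)) ≠ 0 := pow_ne_zero _ two_ne_zero
  constructor
  · funext i
    show ∑ στ : (Fin n → Fin 4) × (Fin n → Fin 4), MAmat n w Ω i στ * AUXvec n P στ = _
    have lhs : ∑ στ : (Fin n → Fin 4) × (Fin n → Fin 4), MAmat n w Ω i στ * AUXvec n P στ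
        = ∑ E ∈ Ω i, Matrix.trace (E * P) * Matrix.trace (Eᴴ * P) := by
      unfold MAmat AUXvec
      simp_rw [mul_assoc (((2:ℂ) ^ (2 * n))⁻¹)]
      rw [← Finset.mul_sum]
      simp_rw [Finset.sum_mul]
      rw [Finset.sum_comm]
      simp_rw [sumA n P]
      rw [← Finset.mul_sum, ← mul_assoc, inv_mul_cancel₀ h2n, one_mul]
    rw [lhs, one_div, ← mul_assoc, mul_inv_cancel₀ (pow_ne_zero 2 htr), one_mul]
  · funext i
    show ∑ στ : (Fin n → Fin 4) × (Fin n → Fin 4), MBmat n w Ω i στ * AUXvec n P στ = _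
    have lhs : ∑ στ : (Fin n → Fin 4) × (Fin n → Fin 4), MBmat n w Ω i στ * AUXvec n P στ
        = ∑ E ∈ Ω i, Matrix.trace (E * P * Eᴴ * P) := by
      unfold MBmat AUXvec
      simp_rw [mul_assoc (((2:ℂ) ^ (2 * n))⁻¹)]
      rw [← Finset.mul_sum]
      simp_rw [Finset.sum_mul]
      rw [Finset.sum_comm]
      simp_rw [sumB n P]
      rw [← Finset.mul_sum, ← mul_assoc, inv_mul_cancel₀ h2n, one_mul]
    rw [lhs, one_div, ← mul_assoc, mul_inv_cancel₀ htr, one_mul]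
end
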